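/- Leftmost reduction is contained in external reduction: if t →lo u then t →x u. -/
import Mathlib


set_option maxHeartbeats 1000000

/-- λ-terms extended with named holes (named multi-contexts).
    A pure λ-term is a `Tm` satisfying `Tm.NoHole`. -/
inductive Tm where
  | var : ℕ → Tm
  | lam : ℕ → Tm → Tm
  | app : Tm → Tm → Tm
  | hole : ℕ → Tm
deriving DecidableEq

namespace Tm

def size : Tm → ℕ
  | var _ => 1
  | hole _ => 1
  | lam _ t => t.size + 1
  | app t u => t.size + u.size + 1

/-- Renaming of the free variable `y` to `z` (intended for fresh `z`). -/
def rename (y z : ℕ) : Tm → Tm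
  | var w => if w = y then var z else var w
  | hole a => hole a
  | lam w t => if w = y then lam w t else lam w (rename y z t)
  | app t u => app (rename y z t) (rename y z u)

theorem size_rename (y z : ℕ) : ∀ t : Tm, (rename y z t).size = t.size
  | var w => by by_cases h : w = y <;> simp [rename, h, size]
  | hole _ => rfl
  | lam w t => by
      by_cases h : w = y <;> simp [rename, h, size, size_rename y z t]
  | app t u => by simp [rename, size, size_rename y z t, size_rename y z u]

/-- Free variables. -/
def fv : Tm → List ℕ
  | var w => [w]
  | hole _ => []
  | lam w t => (fv t).filter (fun v => v ≠ w)
  | app t u => fv t ++ fv u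

/-- All variables occurring (free, bound and binders). -/
def allVars : Tm → List ℕ
  | var w => [w]
  | hole _ => []
  | lam w t => w :: allVars t
  | app t u => allVars t ++ allVars u

/-- The binders of a term, in order. -/
def binders : Tm → List ℕ
  | var _ => []
  | hole _ => []
  | lam w t => w :: binders t
  | app t u => binders t ++ binders u

/-- Names of the holes, in order. -/
def holes : Tm → List ℕ
  | var _ => []
  | hole a => [a]
  | lam _ t => holes t
  | app t u => holes t ++ holes u

/-- A pure λ-term: no named holes. -/
def NoHole (t : Tm) : Prop := t.holes = []

/-- Well-named: pairwise distinct bound names. -/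
def WellNamed (t : Tm) : Prop := t.binders.Nodup

/-- A variable fresh for the given list. -/
def freshVar (l : List ℕ) : ℕ := (l.foldr max 0) + 1

/-- Capture-avoiding substitution `t{x := u}` (as `Tm.subst x u t`). -/
def subst (x : ℕ) (u : Tm) : Tm → Tm
  | var w => if w = x then u else var w
  | hole a => hole a
  | app t v => app (subst x u t) (subst x u v)
  | lam w t =>
      if w = x then lam w t
      else if w ∈ u.fv then
        let z := freshVar (x :: (u.fv ++ t.fv ++ [w]))
        lam z (subst x u (rename w z t))
      else lam w (subst x u t)
  termination_by t => t.size
  decreasing_by all_goals simp [size, size_rename] <;> omega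

/-- Capture-allowing plugging of `c` for the hole named `a` (as `Tm.plug a c t`). -/
def plug (a : ℕ) (c : Tm) : Tm → Tm
  | var w => var w
  | hole b => if b = a then c else hole b
  | lam w t => lam w (plug a c t)
  | app t u => app (plug a c t) (plug a c u)

end Tm

/-- α-equivalence (generating relation). -/
inductive Alpha : Tm → Tm → Prop
  | var (x : ℕ) : Alpha (.var x) (.var x)
  | hole (a : ℕ) : Alpha (.hole a) (.hole a)
  | app {t t' u u' : Tm} : Alpha t t' → Alpha u u' → Alpha (.app t u) (.app t' u')
  | lam (x y : ℕ) (t u : Tm) :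
      (∀ z, z ∉ t.allVars → z ∉ u.allVars → Alpha (t.rename x z) (u.rename y z)) →
      Alpha (.lam x t) (.lam y u)

/-- α-equivalence, as an equivalence relation. -/
def AEq : Tm → Tm → Prop := Relation.EqvGen Alpha

/-- Root β-reduction: (λx.t)u ↦β t{x:=u}. -/
inductive Root : Tm → Tm → Prop
  | beta (x : ℕ) (t u : Tm) : Root (.app (.lam x t) u) (Tm.subst x u t)

/-- One-hole contexts. -/
inductive Ctx where
  | hole : Ctx
  | lam : ℕ → Ctx → Ctx
  | appL : Ctx → Tm → Ctx
  | appR : Tm → Ctx → Ctx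

/-- Plugging a term in a one-hole context. -/
def Ctx.fill : Ctx → Tm → Tm
  | .hole, t => t
  | .lam x C, t => .lam x (C.fill t)
  | .appL C u, t => .app (C.fill t) u
  | .appR u C, t => .app u (C.fill t)

/-- β-reduction: closure of root β under arbitrary contexts. -/
def Beta (t u : Tm) : Prop :=
  ∃ (C : Ctx) (a b : Tm), Root a b ∧ t = C.fill a ∧ u = C.fill b

mutual
  /-- NeutralTm terms: n ::= x | n f. -/
  inductive NeutralTm : Tm → Prop
    | var (x : ℕ) : NeutralTm (.var x)
    | app {n f : Tm} : NeutralTm n → NormalTm f → NeutralTm (.app n f)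
  /-- NormalTm forms: f ::= n | λx.f. -/
  inductive NormalTm : Tm → Prop
    | neu {n : Tm} : NeutralTm n → NormalTm n
    | lam (x : ℕ) {f : Tm} : NormalTm f → NormalTm (.lam x f)
end

/-- Rigid terms: r ::= x | r t. -/
inductive RigidTm : Tm → Prop
  | var (x : ℕ) : RigidTm (.var x)
  | app {r t : Tm} : RigidTm r → RigidTm (.app r t)

mutual
  /-- NeutralTm contexts: N ::= ⟨·⟩ | n L | N t. -/
  inductive NeutralCtx : Ctx → Prop
    | hole : NeutralCtx .hole
    | appR {n : Tm} {L : Ctx} : NeutralTm n → LeftmostCtx L → NeutralCtx (.appR n L)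
    | appL {N : Ctx} {t : Tm} : NeutralCtx N → NeutralCtx (.appL N t)
  /-- Leftmost contexts: L ::= N | λx.L. -/
  inductive LeftmostCtx : Ctx → Prop
    | neu {N : Ctx} : NeutralCtx N → LeftmostCtx N
    | lam (x : ℕ) {L : Ctx} : LeftmostCtx L → LeftmostCtx (.lam x L)
end

mutual
  /-- Rigid contexts: S ::= ⟨·⟩ | r B | S t. -/
  inductive RigidCtx : Ctx → Prop
    | hole : RigidCtx .hole
    | appR {r : Tm} {B : Ctx} : RigidTm r → ExtCtx B → RigidCtx (.appR r B)
    | appL {S : Ctx} {t : Tm} : RigidCtx S → RigidCtx (.appL S t)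
  /-- External contexts: B ::= S | λx.B. -/
  inductive ExtCtx : Ctx → Prop
    | rig {S : Ctx} : RigidCtx S → ExtCtx S
    | lam (x : ℕ) {B : Ctx} : ExtCtx B → ExtCtx (.lam x B)
end

/-- Leftmost(-outermost) reduction: closure of root β under leftmost contexts. -/
def LoStep (t u : Tm) : Prop :=
  ∃ (C : Ctx) (a b : Tm), LeftmostCtx C ∧ Root a b ∧ t = C.fill a ∧ u = C.fill b

/-- External reduction: closure of root β under external contexts. -/
def XStep (t u : Tm) : Prop :=
  ∃ (C : Ctx) (a b : Tm), ExtCtx C ∧ Root a b ∧ t = C.fill a ∧ u = C.fill b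

/-- External reduction, on α-equivalence classes (via representatives). -/
def XStepA (t u : Tm) : Prop := ∃ t' u', AEq t t' ∧ XStep t' u' ∧ AEq u' u

/-- Leftmost reduction, on α-equivalence classes (via representatives). -/
def LoStepA (t u : Tm) : Prop := ∃ t' u', AEq t t' ∧ LoStep t' u' ∧ AEq u' u

/-- `NSteps r k a b`: a sequence of exactly `k` `r`-steps from `a` to `b`. -/
inductive NSteps {α : Type*} (r : α → α → Prop) : ℕ → α → α → Prop
  | refl (a : α) : NSteps r 0 a a
  | step {a b c : α} {n : ℕ} : r a b → NSteps r n b c → NSteps r (n + 1) a c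

theorem neu_rigid : ∀ t, NeutralTm t → RigidTm t := fun t h =>
  NeutralTm.rec (motive_1 := fun t _ => RigidTm t) (motive_2 := fun _ _ => True)
    (fun x => RigidTm.var x) (fun _ _ ih _ => RigidTm.app ih)
    (by intros; trivial) (by intros; trivial) h

theorem lo_ext : ∀ C, LeftmostCtx C → ExtCtx C := fun C h =>
  LeftmostCtx.rec (motive_1 := fun C _ => RigidCtx C) (motive_2 := fun C _ => ExtCtx C)
    RigidCtx.hole (fun hn _ ih => RigidCtx.appR (neu_rigid _ hn) ih)
    (fun _ ih => RigidCtx.appL ih)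
    (fun _ ih => ExtCtx.rig ih) (fun x _ _ ih => ExtCtx.lam x ih) h

/-- leftmost reduction is contained in external reduction. -/
theorem leftmost_is_external (t u : Tm) (ht : t.NoHole) (h : LoStep t u) :
    XStep t u := by
  obtain ⟨C, a, b, hC, hab, h1, h2⟩ := h
  exact ⟨C, a, b, lo_ext C hC, hab, h1, h2⟩
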